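/- Let α : H → G be a group homomorphism, let S be an H-set with x, x' ∈ S, let H̃ ⊆ H, and g, g' ∈ G. In G ×_α S with the quotient relation (gα(h),s) ∼ (g,hs), if V_x, V_{x'} ⊆ S satisfy {h ∈ H | hV_x ∩ V_{x'} ≠ ∅} = H̃, and W_x, W_{x'} denote the images of g × V_x and g' × V_{x'} in G ×_α S, then {g̃ ∈ G | g̃W_x ∩ W_{x'} ≠ ∅} = g' α(H̃) g⁻¹. -/

import Mathlib

/-- The setoid on `G × S` whose quotient is the induced space `G ×_α S`: we identify
`(g * α h, s) ∼ (g, h • s)` for `h : H`. -/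
def indSetoid {H G : Type*} [Group H] [Group G] (α : H →* G) (S : Type*) [MulAction H S] :
    Setoid (G × S) where
  r p q := ∃ h : H, q.1 = p.1 * α h ∧ p.2 = h • q.2
  iseqv := by
    refine ⟨fun p => ⟨1, by simp⟩, ?_, ?_⟩
    · rintro p q ⟨h, h1, h2⟩
      exact ⟨h⁻¹, by rw [h1, map_inv, mul_inv_cancel_right], by rw [h2, inv_smul_smul]⟩
    · rintro p q r ⟨h, h1, h2⟩ ⟨h', h1', h2'⟩
      exact ⟨h * h', by rw [h1', h1, map_mul, mul_assoc], by rw [h2, h2', mul_smul]⟩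

/-- `G ×_α S`, the induction of the `H`-set `S` along `α : H → G`. -/
def Ind {H G : Type*} [Group H] [Group G] (α : H →* G) (S : Type*) [MulAction H S] : Type _ :=
  Quotient (indSetoid α S)

/-- The class `[g, s]` of `(g, s)` in `G ×_α S`. -/
def indMk {H G : Type*} [Group H] [Group G] (α : H →* G) {S : Type*} [MulAction H S]
    (p : G × S) : Ind α S :=
  Quotient.mk (indSetoid α S) p

/-- The `G`-action on `G ×_α S`, `g' • [g, s] = [g' * g, s]`. -/
instance indMulAction {H G : Type*} [Group H] [Group G] (α : H →* G) (S : Type*)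
    [MulAction H S] : MulAction G (Ind α S) where
  smul g' := Quotient.map (fun p => (g' * p.1, p.2))
    (by rintro p q ⟨h, h1, h2⟩; exact ⟨h, by simp only []; rw [h1, mul_assoc], h2⟩)
  one_smul := by
    rintro ⟨p⟩
    show Quotient.map _ _ (Quotient.mk (indSetoid α S) p) = Quotient.mk (indSetoid α S) p
    rw [Quotient.map_mk]
    simp
  mul_smul := by
    rintro g₁ g₂ ⟨p⟩
    show Quotient.map _ _ (Quotient.mk (indSetoid α S) p) =
      Quotient.map _ _ (Quotient.map _ _ (Quotient.mk (indSetoid α S) p))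
    rw [Quotient.map_mk, Quotient.map_mk, Quotient.map_mk]
    simp [mul_assoc]

theorem indSmul_mk {H G : Type*} [Group H] [Group G] (α : H →* G) {S : Type*} [MulAction H S]
    (g' : G) (p : G × S) : g' • indMk α p = indMk α (g' * p.1, p.2) := rfl

section IndMk

variable {H G : Type*} [Group H] [Group G] (α : H →* G) {S : Type*} [MulAction H S]

theorem indMk_eq_indMk_iff (p q : G × S) :
    indMk α p = indMk α q ↔ ∃ h : H, q.1 = p.1 * α h ∧ p.2 = h • q.2 :=
  Quotient.eq (r := indSetoid α S)

theorem smul_indMk_eq_indMk_iff (γ g g' : G) (v v' : S) :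
    γ • indMk α (g, v) = indMk α (g', v') ↔ ∃ k : H, k • v = v' ∧ g' * α k * g⁻¹ = γ := by
  rw [indSmul_mk, indMk_eq_indMk_iff]
  constructor
  · rintro ⟨h, rfl, hv : v = h • v'⟩
    exact ⟨h⁻¹, by rw [hv, inv_smul_smul], by simp [mul_assoc]⟩
  · rintro ⟨k, rfl, rfl⟩
    exact ⟨k⁻¹, by simp [mul_assoc], by simp⟩

theorem smul_image_inter_image_nonempty_iff (V V' : Set S) (g g' γ : G) :
    ((γ • ·) '' (indMk α '' ({g} ×ˢ V)) ∩ indMk α '' ({g'} ×ˢ V')).Nonempty ↔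
      ∃ k : H, ((k • ·) '' V ∩ V').Nonempty ∧ g' * α k * g⁻¹ = γ := by
  constructor
  · rintro ⟨_, ⟨_, ⟨⟨_, v⟩, ⟨rfl, hv⟩, rfl⟩, rfl⟩, ⟨_, v'⟩, ⟨rfl, hv'⟩, hw⟩
    obtain ⟨k, rfl, rfl⟩ := (smul_indMk_eq_indMk_iff α _ _ _ _ _).1 hw.symm
    exact ⟨k, ⟨k • v, ⟨v, hv, rfl⟩, hv'⟩, rfl⟩
  · rintro ⟨k, ⟨_, ⟨v, hv, rfl⟩, hv'⟩, rfl⟩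
    refine ⟨_, ⟨_, ⟨(g, v), ⟨rfl, hv⟩, rfl⟩, rfl⟩, (g', k • v), ⟨rfl, hv'⟩, ?_⟩
    exact ((smul_indMk_eq_indMk_iff α _ _ _ _ _).2 ⟨k, rfl, rfl⟩).symm

end IndMk

/-- Let `α : H → G` be a group homomorphism, `S` an `H`-set, `x, x' ∈ S`,
`g, g' ∈ G`, and let `V_x, V_{x'} ⊆ S` satisfy `{h : H | h V_x ∩ V_{x'} ≠ ∅} = H̃`.
If `W_x` and `W_{x'}` are the images of `{g} × V_x` and `{g'} × V_{x'}` in `G ×_α S`,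
then `{g̃ : G | g̃ W_x ∩ W_{x'} ≠ ∅} = g' α(H̃) g⁻¹`. -/
theorem stmt8 {H G : Type*} [Group H] [Group G] (α : H →* G) {S : Type*} [MulAction H S]
    (Vx Vx' : Set S) (Ht : Set H)
    (hV : {h : H | ((h • ·) '' Vx) ∩ Vx' ≠ ∅} = Ht)
    (g g' : G) (Wx Wx' : Set (Ind α S))
    (hWx : Wx = indMk α '' ({g} ×ˢ Vx)) (hWx' : Wx' = indMk α '' ({g'} ×ˢ Vx')) :
    {gtil : G | ((gtil • ·) '' Wx) ∩ Wx' ≠ ∅} = (fun h : H => g' * α h * g⁻¹) '' Ht := by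
  subst hV hWx hWx'
  ext γ
  simp only [Set.mem_ofPred_eq, Set.mem_image, ← Set.nonempty_iff_ne_empty,
    smul_image_inter_image_nonempty_iff]
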